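/- The scalar curvature Sc := Σ_{i,j=1}^{4} g^{ij} R_{ij} − h¹¹(t) Σ_{i,j=1}^{4} g_{ij} S^{(i)(j)} equals −4 e^{−2σ(x)} 𝒫^{1/2} Σ₁₁ − (3/2) h¹¹(t) e^{2σ(x)} 𝒫^{−1/2}, where Σ₁₁ := Σ_{1 ≤ i < j ≤ 4} σ_{ij}(x)/(p_i p_j). -/

import Mathlib

/-- Partial derivative of `f : (Fin 4 → ℝ) → ℝ` with respect to the `i`-th coordinate. -/
noncomputable def pd (f : (Fin 4 → ℝ) → ℝ) (i : Fin 4) (v : Fin 4 → ℝ) : ℝ :=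
  deriv (fun s => f (Function.update v i s)) (v i)

/-- Kronecker delta. -/
noncomputable def kron (i j : Fin 4) : ℝ := if i = j then 1 else 0

/-- The contravariant metrical d-tensor `g^{ij} = (e^{-2σ(x)}(1-2δ^{ij})/2) 𝒫^{1/2}/(p_i p_j)`. -/
noncomputable def gup (σ : (Fin 4 → ℝ) → ℝ) (x p : Fin 4 → ℝ) (i j : Fin 4) : ℝ :=
  Real.exp (-2 * σ x) * (1 - 2 * kron i j) / 2 * Real.sqrt (∏ m, p m) / (p i * p j)

/-- The covariant metrical d-tensor `g_{jk} = (e^{2σ(x)}(1-2δ_{jk})/2) p_j p_k 𝒫^{-1/2}`. -/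
noncomputable def gdown (σ : (Fin 4 → ℝ) → ℝ) (x p : Fin 4 → ℝ) (j k : Fin 4) : ℝ :=
  Real.exp (2 * σ x) * (1 - 2 * kron j k) / 2 * p j * p k / Real.sqrt (∏ m, p m)

/-- `σ_{ij} = ∂²σ/∂x^i∂x^j`. -/
noncomputable def sig2 (σ : (Fin 4 → ℝ) → ℝ) (x : Fin 4 → ℝ) (i j : Fin 4) : ℝ :=
  pd (fun x' => pd σ i x') j x

/-- `Σ₁₁ = Σ_{i<j} σ_{ij}(x)/(p_i p_j)`. -/
noncomputable def sig11 (σ : (Fin 4 → ℝ) → ℝ) (x p : Fin 4 → ℝ) : ℝ :=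
  ∑ i, ∑ j, if i < j then sig2 σ x i j / (p i * p j) else 0


lemma pd_eq0 (f : (Fin 4 → ℝ) → ℝ) (i : Fin 4) (v : Fin 4 → ℝ)
    (hf : DifferentiableAt ℝ f v) :
    pd f i v = fderiv ℝ f v (Pi.single i 1) := by
  have h1 : HasDerivAt (Function.update v i) (Pi.single i (1:ℝ)) (v i) :=
    hasDerivAt_update v i (v i)
  have h2 : HasFDerivAt f (fderiv ℝ f v) (Function.update v i (v i)) := by
    rw [Function.update_eq_self]; exact hf.hasFDerivAt
  exact (h2.comp_hasDerivAt (v i) h1).deriv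

lemma pd_fun0 (σ : (Fin 4 → ℝ) → ℝ) (hσ : ContDiff ℝ (⊤ : ℕ∞) σ) (i : Fin 4) :
    (fun x' => pd σ i x') = fun x' => fderiv ℝ σ x' (Pi.single i 1) := by
  funext x'
  exact pd_eq0 σ i x' (hσ.differentiable (by simp) x')

lemma sig2_symm (σ : (Fin 4 → ℝ) → ℝ) (hσ : ContDiff ℝ (⊤ : ℕ∞) σ) (x : Fin 4 → ℝ) (i j : Fin 4) :
    sig2 σ x i j = sig2 σ x j i := by
  have key : ∀ a b : Fin 4, sig2 σ x a b
      = fderiv ℝ (fderiv ℝ σ) x (Pi.single b 1) (Pi.single a 1) := by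
    intro a b
    have hd : Differentiable ℝ (fderiv ℝ σ) :=
      (hσ.fderiv_right (m := (⊤ : ℕ∞)) le_rfl).differentiable (by simp)
    have hda : DifferentiableAt ℝ (fun x' => fderiv ℝ σ x' (Pi.single a 1)) x := by
      exact ((ContinuousLinearMap.apply ℝ ℝ (Pi.single a 1)).differentiable.comp hd) x
    rw [sig2, pd_fun0 σ hσ a, pd_eq0 _ _ _ hda]
    rw [fderiv_clm_apply (hd x) (differentiableAt_const _)]
    simp
  rw [key, key]
  exact (hσ.contDiffAt.isSymmSndFDerivAt (by norm_num; exact WithTop.coe_le_coe.mpr (le_top : (2:ℕ∞) ≤ ⊤))) _ _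

set_option maxHeartbeats 4000000 in
/-- the scalar curvature
`Sc = Σ_{i,j} g^{ij} R_{ij} − h¹¹(t) Σ_{i,j} g_{ij} S^{(i)(j)}` equals
`−4 e^{−2σ(x)} 𝒫^{1/2} Σ₁₁ − (3/2) h¹¹(t) e^{2σ(x)} 𝒫^{−1/2}`. -/
theorem stmt_12 (σ : (Fin 4 → ℝ) → ℝ) (hσ : ContDiff ℝ (⊤ : ℕ∞) σ)
    (h : ℝ → ℝ) (hh : ContDiff ℝ (⊤ : ℕ∞) h) (hhpos : ∀ t, 0 < h t)
    (t : ℝ) (x p : Fin 4 → ℝ) (hp : ∀ i, 0 < p i)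
    (R : Fin 4 → Fin 4 → ℝ)
    (hRdiag : ∀ i, R i i = 0)
    (hRoff : ∀ i j k l : Fin 4, i ≠ j → k ≠ l → k ≠ i → k ≠ j → l ≠ i → l ≠ j →
      R i j = -2 * sig2 σ x i j - (p i / p k) * sig2 σ x j k - (p i / p l) * sig2 σ x j l) :
    (∑ i, ∑ j, gup σ x p i j * R i j)
      - (h t)⁻¹ * ∑ i, ∑ j, gdown σ x p i j * ((1 - 4 * kron i j) / (8 * p i * p j))
    = -4 * Real.exp (-2 * σ x) * Real.sqrt (∏ m, p m) * sig11 σ x p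
      - 3 / 2 * (h t)⁻¹ * Real.exp (2 * σ x) / Real.sqrt (∏ m, p m) := by
  have hR01 := hRoff 0 1 2 3 (by decide) (by decide) (by decide) (by decide) (by decide) (by decide)
  have hR02 := hRoff 0 2 1 3 (by decide) (by decide) (by decide) (by decide) (by decide) (by decide)
  have hR03 := hRoff 0 3 1 2 (by decide) (by decide) (by decide) (by decide) (by decide) (by decide)
  have hR10 := hRoff 1 0 2 3 (by decide) (by decide) (by decide) (by decide) (by decide) (by decide)
  have hR12 := hRoff 1 2 0 3 (by decide) (by decide) (by decide) (by decide) (by decide) (by decide)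
  have hR13 := hRoff 1 3 0 2 (by decide) (by decide) (by decide) (by decide) (by decide) (by decide)
  have hR20 := hRoff 2 0 1 3 (by decide) (by decide) (by decide) (by decide) (by decide) (by decide)
  have hR21 := hRoff 2 1 0 3 (by decide) (by decide) (by decide) (by decide) (by decide) (by decide)
  have hR23 := hRoff 2 3 0 1 (by decide) (by decide) (by decide) (by decide) (by decide) (by decide)
  have hR30 := hRoff 3 0 1 2 (by decide) (by decide) (by decide) (by decide) (by decide) (by decide)
  have hR31 := hRoff 3 1 0 2 (by decide) (by decide) (by decide) (by decide) (by decide) (by decide)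
  have hR32 := hRoff 3 2 0 1 (by decide) (by decide) (by decide) (by decide) (by decide) (by decide)
  have e10 : sig2 σ x 1 0 = sig2 σ x 0 1 := sig2_symm σ hσ x 1 0
  have e20 : sig2 σ x 2 0 = sig2 σ x 0 2 := sig2_symm σ hσ x 2 0
  have e30 : sig2 σ x 3 0 = sig2 σ x 0 3 := sig2_symm σ hσ x 3 0
  have e21 : sig2 σ x 2 1 = sig2 σ x 1 2 := sig2_symm σ hσ x 2 1
  have e31 : sig2 σ x 3 1 = sig2 σ x 1 3 := sig2_symm σ hσ x 3 1
  have e32 : sig2 σ x 3 2 = sig2 σ x 2 3 := sig2_symm σ hσ x 3 2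
  have hs : (0:ℝ) < Real.sqrt (∏ m, p m) :=
    Real.sqrt_pos.mpr (Finset.prod_pos fun i _ => hp i)
  have hp0 := (hp 0).ne'
  have hp1 := (hp 1).ne'
  have hp2 := (hp 2).ne'
  have hp3 := (hp 3).ne'
  have hht := (hhpos t).ne'
  simp only [Fin.sum_univ_four, gup, gdown, sig11, kron, hRdiag, hR01, hR02, hR03, hR10,
    hR12, hR13, hR20, hR21, hR23, hR30, hR31, hR32, e10, e20, e30, e21, e31, e32,
    Fin.reduceEq, Fin.reduceLT, if_true, if_false, reduceIte]
  norm_num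
  field_simp
  ring
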